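/- arXiv:2412.09316 — 3 statements merged into one kernel-verified Lean document; each statement's English description precedes it below -/
import Mathlib

section
/- Let D ⊂ ℝ^d be compact and convex, ν a probability measure on D absolutely continuous with respect to Lebesgue measure, Φ ∈ C(D) with maximum value Φ̄ on D, and η > 0. Suppose (X,g) is a tuple of n pairwise distinct sites and weights such that m_i[X,g] ≥ m_i*/2 for positive constants m_1*,…,m_n*, and F_n^η(X,g) ≥ c for some c ∈ ℝ. Then for all i ≠ j: dist(x_i, D) ≤ √(2(Φ̄ − c)/(η m_i*)) and |x_i − x_j| ≥ √(η m_i* m_j* / (4(Φ̄ − c))). -/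
/-!
Laguerre cells cover `D` and two of them meet only inside a hyperplane, which `ν ≪ volume`
does not charge, so the cell masses sum to one. The barycentres lie in the closed convex set `D`,
hence `F_n ≤ Φ̄` and `η R_n ≤ Φ̄ - c`. Each bound then comes from a single term of `R_n`: the
transport cost of cell `i` is at least `m_i dist(x_i, D)²`, and the pair term
`m_i m_j / |x_i - x_j|²` controls the separation, with `m_i ≥ m_i*/2`.
-/

open MeasureTheory Set Filter Topology
open scoped ENNReal NNReal

noncomputable section

/-- Euclidean space `ℝ^d`. -/
abbrev Euc (d : ℕ) : Type := EuclideanSpace ℝ (Fin d)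

/-- `ρ ⪯ μ` in the convex order: `∫ ψ dρ ≤ ∫ ψ dμ` for every convex function `ψ` for which
both integrals exist. -/
def ConvexOrderLE {d : ℕ} (ρ μ : Measure (Euc d)) : Prop :=
  ∀ ψ : Euc d → ℝ, ConvexOn ℝ Set.univ ψ → Integrable ψ μ → Integrable ψ ρ →
    ∫ x, ψ x ∂ρ ≤ ∫ x, ψ x ∂μ

/-- The set of fusions of `ν`: probability measures supported on `D` that are dominated by `ν`
in the convex order. -/
def fusions {d : ℕ} (D : Set (Euc d)) (ν : Measure (Euc d)) : Set (Measure (Euc d)) :=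
  {ρ | IsProbabilityMeasure ρ ∧ ρ Dᶜ = 0 ∧ ConvexOrderLE ρ ν}

/-- The (topological) support of a measure. -/
def msupport {d : ℕ} (ρ : Measure (Euc d)) : Set (Euc d) := {x | ∀ U ∈ nhds x, ρ U ≠ 0}

/-- Laguerre cell of site `x_i` with weight `g_i` inside the domain `D`. -/
def LaguerreCell {d n : ℕ} (D : Set (Euc d)) (X : Fin n → Euc d) (g : Fin n → ℝ)
    (i : Fin n) : Set (Euc d) :=
  {y ∈ D | ∀ j, ‖y - X i‖ ^ 2 - g i ≤ ‖y - X j‖ ^ 2 - g j}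

/-- ν-mass of the `i`-th Laguerre cell. -/
def cellMass {d n : ℕ} (D : Set (Euc d)) (ν : Measure (Euc d)) (X : Fin n → Euc d)
    (g : Fin n → ℝ) (i : Fin n) : ℝ :=
  (ν (LaguerreCell D X g i)).toReal

/-- ν-barycenter of the `i`-th Laguerre cell. -/
def cellBary {d n : ℕ} (D : Set (Euc d)) (ν : Measure (Euc d)) (X : Fin n → Euc d)
    (g : Fin n → ℝ) (i : Fin n) : Euc d :=
  (cellMass D ν X g i)⁻¹ • ∫ y in LaguerreCell D X g i, y ∂ν

/-- The objective `F_n[X,g] = Σ_{i : m_i > 0} m_i[X,g] Φ(b_i[X,g])`. -/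
def Fn {d n : ℕ} (D : Set (Euc d)) (ν : Measure (Euc d)) (Φ : Euc d → ℝ)
    (X : Fin n → Euc d) (g : Fin n → ℝ) : ℝ :=
  ∑ i, if 0 < cellMass D ν X g i then cellMass D ν X g i * Φ (cellBary D ν X g i) else 0

/-- The penalty term `R_n[X,g]`. -/
def Rn {d n : ℕ} (D : Set (Euc d)) (ν : Measure (Euc d))
    (X : Fin n → Euc d) (g : Fin n → ℝ) : ℝ :=
  (∑ i, if 0 < cellMass D ν X g i then
      ∫ y in LaguerreCell D X g i, ‖y - X i‖ ^ 2 ∂ν else 0)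
  + ∑ i, ∑ j, if i ≠ j ∧ 0 < cellMass D ν X g i ∧ 0 < cellMass D ν X g j then
      cellMass D ν X g i * cellMass D ν X g j / ‖X i - X j‖ ^ 2 else 0

/-- The penalized objective `F_n^η = F_n - η R_n`. -/
def Fη {d n : ℕ} (D : Set (Euc d)) (ν : Measure (Euc d)) (Φ : Euc d → ℝ) (η : ℝ)
    (X : Fin n → Euc d) (g : Fin n → ℝ) : ℝ :=
  Fn D ν Φ X g - η * Rn D ν X g

open scoped InnerProductSpace

theorem addHaar_setOf_inner_eq {E : Type*} [NormedAddCommGroup E] [InnerProductSpace ℝ E]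
    [FiniteDimensional ℝ E] [MeasurableSpace E] [BorelSpace E] (μ : Measure E)
    [μ.IsAddHaarMeasure] {v : E} (hv : v ≠ 0) (r : ℝ) : μ {y | ⟪v, y⟫_ℝ = r} = 0 := by
  let A : AffineSubspace ℝ E :=
    (AffineSubspace.mk' r ⊥).comap (innerSL ℝ v).toLinearMap.toAffineMap
  have hA : (A : Set E) = {y | ⟪v, y⟫_ℝ = r} := by
    ext y; simp [A, AffineSubspace.mem_mk', sub_eq_zero]
  rw [← hA]
  refine Measure.addHaar_affineSubspace μ A fun htop => ?_
  have hmem : ((r + 1) / ‖v‖ ^ 2) • v ∈ A := htop ▸ AffineSubspace.mem_top ℝ E _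
  have hv2 : ‖v‖ ^ 2 ≠ 0 := by positivity
  rw [← SetLike.mem_coe, hA, mem_ofPred_eq, inner_smul_right, real_inner_self_eq_norm_sq,
    div_mul_cancel₀ _ hv2] at hmem
  linarith

section LaguerreCells

variable {d n : ℕ} {D : Set (Euc d)} {ν : Measure (Euc d)} {X : Fin n → Euc d} {g : Fin n → ℝ}

theorem cellMass_nonneg (i : Fin n) : 0 ≤ cellMass D ν X g i := ENNReal.toReal_nonneg

theorem laguerreCell_subset (i : Fin n) : LaguerreCell D X g i ⊆ D := sep_subset _ _

theorem isClosed_laguerreCell (hD : IsClosed D) (i : Fin n) :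
    IsClosed (LaguerreCell D X g i) := by
  have hcont : ∀ j, Continuous fun y : Euc d => ‖y - X j‖ ^ 2 - g j := by fun_prop
  have hcell : LaguerreCell D X g i =
      D ∩ ⋂ j, {y | ‖y - X i‖ ^ 2 - g i ≤ ‖y - X j‖ ^ 2 - g j} := by
    ext y; simp [LaguerreCell]
  rw [hcell]
  exact hD.inter (isClosed_iInter fun j => isClosed_le (hcont i) (hcont j))

theorem isCompact_laguerreCell (hD : IsCompact D) (i : Fin n) :
    IsCompact (LaguerreCell D X g i) :=
  hD.of_isClosed_subset (isClosed_laguerreCell hD.isClosed i) (laguerreCell_subset i)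

theorem laguerreCell_inter_subset (i j : Fin n) :
    LaguerreCell D X g i ∩ LaguerreCell D X g j ⊆
      {y | ⟪X j - X i, y⟫_ℝ = (‖X j‖ ^ 2 - ‖X i‖ ^ 2 + g i - g j) / 2} := by
  rintro y ⟨⟨-, hi⟩, ⟨-, hj⟩⟩
  have hij := hi j
  have hji := hj i
  rw [norm_sub_sq_real, norm_sub_sq_real] at hij hji
  rw [mem_ofPred_eq, inner_sub_left, real_inner_comm y (X j), real_inner_comm y (X i)]
  linarith

theorem measure_laguerreCell_inter_eq_zero (hac : ν ≪ volume) (hX : Function.Injective X)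
    {i j : Fin n} (hij : i ≠ j) :
    ν (LaguerreCell D X g i ∩ LaguerreCell D X g j) = 0 :=
  measure_mono_null (laguerreCell_inter_subset i j)
    (hac (addHaar_setOf_inner_eq volume (sub_ne_zero.2 (hX.ne hij.symm)) _))

theorem iUnion_laguerreCell [Nonempty (Fin n)] : ⋃ i, LaguerreCell D X g i = D := by
  refine (iUnion_subset laguerreCell_subset).antisymm fun y hy => ?_
  obtain ⟨i, -, hi⟩ := Finset.univ.exists_min_image (fun j => ‖y - X j‖ ^ 2 - g j)
    Finset.univ_nonempty
  exact mem_iUnion.2 ⟨i, hy, fun j => hi j (Finset.mem_univ j)⟩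

theorem sum_cellMass_eq_one [IsProbabilityMeasure ν] [Nonempty (Fin n)] (hD : IsClosed D)
    (hνD : ν Dᶜ = 0) (hac : ν ≪ volume) (hX : Function.Injective X) :
    ∑ i, cellMass D ν X g i = 1 := by
  have hunion : ∑ i, ν (LaguerreCell D X g i) = 1 := by
    have h := measure_iUnion₀ (μ := ν)
      (fun i j hij => measure_laguerreCell_inter_eq_zero (g := g) hac hX hij)
      (fun i => (isClosed_laguerreCell hD i).measurableSet.nullMeasurableSet)
    rw [tsum_fintype, iUnion_laguerreCell, (prob_compl_eq_zero_iff hD.measurableSet).1 hνD] at h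
    exact h.symm
  simp only [cellMass]
  rw [← ENNReal.toReal_sum fun i _ => measure_ne_top ν _, hunion, ENNReal.toReal_one]

theorem cellBary_mem [IsFiniteMeasure ν] (hD : IsCompact D) (hDconv : Convex ℝ D) {i : Fin n}
    (hi : 0 < cellMass D ν X g i) : cellBary D ν X g i ∈ D := by
  have hcell := isCompact_laguerreCell (X := X) (g := g) hD i
  have hbary : cellBary D ν X g i = ⨍ y in LaguerreCell D X g i, y ∂ν := by
    rw [setAverage_eq]; rfl
  rw [hbary]
  exact hDconv.set_average_mem hD.isClosed (fun h => by simp [cellMass, h] at hi)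
    (measure_ne_top ν _)
    ((ae_restrict_mem hcell.isClosed.measurableSet).mono fun y hy => laguerreCell_subset i hy)
    (continuousOn_id.integrableOn_compact hcell)

theorem Fn_le_of_isGreatest [IsProbabilityMeasure ν] [Nonempty (Fin n)] (hD : IsCompact D)
    (hDconv : Convex ℝ D) (hνD : ν Dᶜ = 0) (hac : ν ≪ volume) (hX : Function.Injective X)
    {Φ : Euc d → ℝ} {Φbar : ℝ} (hΦbar : IsGreatest (Φ '' D) Φbar) :
    Fn D ν Φ X g ≤ Φbar := by
  calc Fn D ν Φ X g ≤ ∑ i, cellMass D ν X g i * Φbar := by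
        refine Finset.sum_le_sum fun i _ => ?_
        split_ifs with hi
        · exact mul_le_mul_of_nonneg_left
            (hΦbar.2 (mem_image_of_mem Φ (cellBary_mem hD hDconv hi))) hi.le
        · rw [le_antisymm (not_lt.1 hi) (cellMass_nonneg i), zero_mul]
    _ = Φbar := by rw [← Finset.sum_mul, sum_cellMass_eq_one hD.isClosed hνD hac hX, one_mul]

theorem setIntegral_laguerreCell_le_Rn {i : Fin n} (hi : 0 < cellMass D ν X g i) :
    ∫ y in LaguerreCell D X g i, ‖y - X i‖ ^ 2 ∂ν ≤ Rn D ν X g := by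
  have h := Finset.single_le_sum (f := fun k => if 0 < cellMass D ν X g k then
    ∫ y in LaguerreCell D X g k, ‖y - X k‖ ^ 2 ∂ν else 0) (fun k _ => by positivity)
    (Finset.mem_univ i)
  rw [if_pos hi] at h
  unfold Rn
  exact h.trans (le_add_of_nonneg_right (Finset.sum_nonneg fun k _ => Finset.sum_nonneg fun l _ =>
    ite_nonneg (div_nonneg (mul_nonneg (cellMass_nonneg k) (cellMass_nonneg l)) (sq_nonneg _))
      le_rfl))

theorem cellMass_mul_div_le_Rn {i j : Fin n} (hij : i ≠ j) (hi : 0 < cellMass D ν X g i)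
    (hj : 0 < cellMass D ν X g j) :
    cellMass D ν X g i * cellMass D ν X g j / ‖X i - X j‖ ^ 2 ≤ Rn D ν X g := by
  have hterm : ∀ k l, 0 ≤ if k ≠ l ∧ 0 < cellMass D ν X g k ∧ 0 < cellMass D ν X g l then
      cellMass D ν X g k * cellMass D ν X g l / ‖X k - X l‖ ^ 2 else 0 := fun k l =>
    ite_nonneg (div_nonneg (mul_nonneg (cellMass_nonneg k) (cellMass_nonneg l)) (sq_nonneg _))
      le_rfl
  have h := (Finset.single_le_sum (fun l _ => hterm i l) (Finset.mem_univ j)).trans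
    (Finset.single_le_sum (f := fun k => ∑ l, _)
      (fun k _ => Finset.sum_nonneg fun l _ => hterm k l) (Finset.mem_univ i))
  rw [if_pos ⟨hij, hi, hj⟩] at h
  unfold Rn
  exact h.trans (le_add_of_nonneg_left (Finset.sum_nonneg fun k _ => by positivity))

theorem sq_infDist_mul_cellMass_le [IsFiniteMeasure ν] (hD : IsCompact D) (i : Fin n) :
    Metric.infDist (X i) D ^ 2 * cellMass D ν X g i ≤
      ∫ y in LaguerreCell D X g i, ‖y - X i‖ ^ 2 ∂ν := by
  have hcell := isCompact_laguerreCell (X := X) (g := g) hD i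
  calc _ = ∫ _ in LaguerreCell D X g i, Metric.infDist (X i) D ^ 2 ∂ν := by
        rw [setIntegral_const, smul_eq_mul, mul_comm, measureReal_def, cellMass]
    _ ≤ _ := by
      have hcont : Continuous fun y => ‖y - X i‖ ^ 2 := by fun_prop
      refine setIntegral_mono_on (integrableOn_const (measure_ne_top ν _))
        (hcont.continuousOn.integrableOn_compact hcell) hcell.measurableSet fun y hy => ?_
      rw [← dist_eq_norm, dist_comm]
      exact pow_le_pow_left₀ Metric.infDist_nonneg
        (Metric.infDist_le_dist_of_mem (laguerreCell_subset i hy)) 2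

theorem infDist_le_of_Rn_le [IsFiniteMeasure ν] (hD : IsCompact D) {i : Fin n} {η m C : ℝ}
    (hη : 0 < η) (hm : 0 < m) (hmass : m / 2 ≤ cellMass D ν X g i) (hR : η * Rn D ν X g ≤ C) :
    Metric.infDist (X i) D ≤ √(2 * C / (η * m)) := by
  have hint := (sq_infDist_mul_cellMass_le hD i).trans
    (setIntegral_laguerreCell_le_Rn ((half_pos hm).trans_le hmass))
  refine Real.le_sqrt_of_sq_le ((le_div_iff₀ (by positivity)).2 ?_)
  calc Metric.infDist (X i) D ^ 2 * (η * m)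
      ≤ 2 * η * (Metric.infDist (X i) D ^ 2 * cellMass D ν X g i) := by
        nlinarith [mul_le_mul_of_nonneg_left hmass
          (by positivity : 0 ≤ 2 * η * Metric.infDist (X i) D ^ 2)]
    _ ≤ 2 * (η * Rn D ν X g) := by nlinarith
    _ ≤ 2 * C := by linarith

theorem le_dist_of_Rn_le (hX : Function.Injective X) {i j : Fin n} (hij : i ≠ j)
    {η mi mj C : ℝ} (hη : 0 < η) (hmi : 0 < mi) (hmj : 0 < mj)
    (hmass_i : mi / 2 ≤ cellMass D ν X g i) (hmass_j : mj / 2 ≤ cellMass D ν X g j)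
    (hR : η * Rn D ν X g ≤ C) :
    √(η * mi * mj / (4 * C)) ≤ dist (X i) (X j) := by
  have hpos_i := (half_pos hmi).trans_le hmass_i
  have hpos_j := (half_pos hmj).trans_le hmass_j
  have hdist : 0 < dist (X i) (X j) := dist_pos.2 (hX.ne hij)
  have hpair := cellMass_mul_div_le_Rn hij hpos_i hpos_j
  rw [← dist_eq_norm, div_le_iff₀ (by positivity)] at hpair
  have hmasses : η * (cellMass D ν X g i * cellMass D ν X g j) ≤ C * dist (X i) (X j) ^ 2 := by
    nlinarith
  have hC : 0 < C := pos_of_mul_pos_left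
    ((by positivity : 0 < η * (cellMass D ν X g i * cellMass D ν X g j)).trans_le hmasses)
    (sq_nonneg _)
  rw [← Real.sqrt_sq hdist.le]
  refine Real.sqrt_le_sqrt ((div_le_iff₀ (by positivity)).2 ?_)
  nlinarith [mul_le_mul hmass_i hmass_j (half_pos hmj).le hpos_i.le]

end LaguerreCells

theorem a_priori_bounds_general
    {d : ℕ} (D : Set (Euc d)) (hD : IsCompact D) (hDconv : Convex ℝ D)
    (ν : Measure (Euc d)) [IsProbabilityMeasure ν] (hνD : ν Dᶜ = 0)
    (hac : ν ≪ (volume : Measure (Euc d)))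
    (Φ : Euc d → ℝ)
    (Φbar : ℝ) (hΦbar : IsGreatest (Φ '' D) Φbar)
    (η : ℝ) (hη : 0 < η)
    {n : ℕ} (X : Fin n → Euc d) (g : Fin n → ℝ) (hX : Function.Injective X)
    (mstar : Fin n → ℝ) (hmstar : ∀ i, 0 < mstar i)
    (hmass : ∀ i, mstar i / 2 ≤ cellMass D ν X g i)
    (c : ℝ) (hc : c ≤ Fη D ν Φ η X g) :
    (∀ i, Metric.infDist (X i) D ≤ Real.sqrt (2 * (Φbar - c) / (η * mstar i))) ∧
    (∀ i j, i ≠ j →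
      Real.sqrt (η * mstar i * mstar j / (4 * (Φbar - c))) ≤ dist (X i) (X j)) := by
  have hR : ∀ i : Fin n, η * Rn D ν X g ≤ Φbar - c := fun i => by
    have : Nonempty (Fin n) := ⟨i⟩
    have hFn := Fn_le_of_isGreatest (g := g) hD hDconv hνD hac hX hΦbar
    unfold Fη at hc
    linarith
  exact ⟨fun i => infDist_le_of_Rn_le hD hη (hmstar i) (hmass i) (hR i),
    fun i j hij => le_dist_of_Rn_le hX hij hη (hmstar i) (hmstar j) (hmass i) (hmass j) (hR i)⟩

/-- a priori bounds along maximizing sequences: if the cell masses satisfy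
`m_i[X,g] ≥ m_i*/2` with `m_i* > 0` and `F_n^η(X,g) ≥ c`, then for `i ≠ j` the site `x_i`
stays within distance `√(2(Φ̄−c)/(η m_i*))` of `D` and `|x_i−x_j| ≥ √(η m_i* m_j*/(4(Φ̄−c)))`,
where `Φ̄` is the maximum of `Φ` on `D`. -/
theorem a_priori_bounds
    {d : ℕ} (D : Set (Euc d)) (hD : IsCompact D) (hDconv : Convex ℝ D)
    (ν : Measure (Euc d)) [IsProbabilityMeasure ν] (hνD : ν Dᶜ = 0)
    (hac : ν ≪ (volume : Measure (Euc d)))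
    (Φ : Euc d → ℝ) (hΦ : ContinuousOn Φ D)
    (Φbar : ℝ) (hΦbar : IsGreatest (Φ '' D) Φbar)
    (η : ℝ) (hη : 0 < η)
    {n : ℕ} (X : Fin n → Euc d) (g : Fin n → ℝ) (hX : Function.Injective X)
    (mstar : Fin n → ℝ) (hmstar : ∀ i, 0 < mstar i)
    (hmass : ∀ i, mstar i / 2 ≤ cellMass D ν X g i)
    (c : ℝ) (hc : c ≤ Fη D ν Φ η X g) :
    (∀ i, Metric.infDist (X i) D ≤ Real.sqrt (2 * (Φbar - c) / (η * mstar i))) ∧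
    (∀ i j, i ≠ j →
      Real.sqrt (η * mstar i * mstar j / (4 * (Φbar - c))) ≤ dist (X i) (X j)) :=
  a_priori_bounds_general D hD hDconv ν hνD hac Φ Φbar hΦbar η hη X g hX mstar hmstar hmass c hc
end
end

section
/- Let D ⊂ ℝ^d be compact and convex, ν a probability measure on D absolutely continuous with respect to Lebesgue measure, and X = (x_1,…,x_n) pairwise distinct sites. For the semi-discrete dual Kantorovich functional D[g] = ∫_D g^C(y) dν(y) + m·g, where g^C(y) = min_{1≤i≤n}(|y−x_i|² − g_i) and m ∈ ℝ^n is fixed, the partial derivative with respect to the weight g_j satisfies ∂_{g_j} D[g] = m_j − ∫_D χ_{L_j[X,g]}(y) dν(y) = m_j − ν(L_j[X,g]). -/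
/-!
For fixed `y`, the map `t ↦ min_i (|y - x_i|² - g_i)` with `g_j` replaced by `t` is 1-Lipschitz,
and at `t = g_j` it has derivative `-1` when `x_j` is the unique minimiser and `0` when some other
site does strictly better. The remaining points `y` lie on the hyperplanes
`|y - x_i|² - |y - x_j|² = g_i - g_j` (`i ≠ j`), which are Lebesgue-null because the sites are
distinct, hence `ν`-null. Differentiating under the integral sign (dominated by the constant `1`)
gives `-ν(L_j[X,g])`, and the linear term `m · g` contributes `m_j`.
-/

open MeasureTheory Set Filter Topology
open scoped ENNReal NNReal

noncomputable section

/-- The semi-discrete dual Kantorovich functional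
`D[g] = ∫_D g^C(y) dν(y) + m·g` with `g^C(y) = min_i (|y−x_i|² − g_i)`. -/
def dualKantorovich {d n : ℕ} (D : Set (Euc d)) (ν : Measure (Euc d)) (X : Fin n → Euc d)
    (m : Fin n → ℝ) (g : Fin n → ℝ) : ℝ :=
  (∫ y in D, ⨅ i, (‖y - X i‖ ^ 2 - g i) ∂ν) + ∑ i, m i * g i


theorem norm_sub_sq_sub_norm_sub_sq {E : Type*} [NormedAddCommGroup E] [InnerProductSpace ℝ E]
    (y a b : E) :
    ‖y - a‖ ^ 2 - ‖y - b‖ ^ 2 = 2 * inner ℝ (b - a) y + ‖a‖ ^ 2 - ‖b‖ ^ 2 := by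
  rw [norm_sub_sq_real, norm_sub_sq_real, inner_sub_left, real_inner_comm a, real_inner_comm b]
  ring

section HaarNull

variable {E : Type*} [NormedAddCommGroup E] [InnerProductSpace ℝ E] [FiniteDimensional ℝ E]
  [MeasurableSpace E] [BorelSpace E] (μ : Measure E) [μ.IsAddHaarMeasure]

theorem ae_inner_ne {v : E} (hv : v ≠ 0) (c : ℝ) : ∀ᵐ y ∂μ, inner ℝ v y ≠ c := by
  have hsurj : Function.Surjective (innerSL ℝ v : E →L[ℝ] ℝ).toLinearMap := fun s =>
    ⟨(s / ‖v‖ ^ 2) • v, by simp [pow_ne_zero 2 (norm_ne_zero_iff.2 hv)]⟩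
  exact (ae_comp_linearMap_mem_iff _ μ volume hsurj (measurableSet_singleton c).compl).2
    (compl_mem_ae_iff.2 (measure_singleton c))

theorem ae_norm_sub_sq_sub_norm_sub_sq_ne {a b : E} (hab : a ≠ b) (r : ℝ) :
    ∀ᵐ y ∂μ, ‖y - a‖ ^ 2 - ‖y - b‖ ^ 2 ≠ r := by
  filter_upwards [ae_inner_ne μ (sub_ne_zero.2 hab.symm) ((r - ‖a‖ ^ 2 + ‖b‖ ^ 2) / 2)] with y hy
  rw [norm_sub_sq_sub_norm_sub_sq]
  contrapose! hy
  linarith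

theorem MeasureTheory.Measure.AbsolutelyContinuous.ae_norm_sub_sq_sub_ne {ν : Measure E}
    (hν : ν ≪ μ) {ι : Type*} [Countable ι] {X : ι → E} (hX : Function.Injective X)
    (g : ι → ℝ) (j : ι) : ∀ᵐ y ∂ν, ∀ i ≠ j, ‖y - X i‖ ^ 2 - g i ≠ ‖y - X j‖ ^ 2 - g j := by
  refine hν.ae_le (ae_all_iff.2 fun i => ?_)
  rcases eq_or_ne i j with rfl | hij
  · exact .of_forall fun _ h => (h rfl).elim
  filter_upwards [ae_norm_sub_sq_sub_norm_sub_sq_ne μ (hX.ne hij) (g i - g j)] with y hy _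
  contrapose! hy
  linarith

end HaarNull

section FiniteInfimum

variable {ι : Type*} [Finite ι]

theorem continuous_ciInf_of_finite {T : Type*} [TopologicalSpace T]
    {f : ι → T → ℝ} (hf : ∀ i, Continuous (f i)) : Continuous fun x => ⨅ i, f i x := by
  rcases isEmpty_or_nonempty ι with hι | hι
  · simpa only [Real.iInf_of_isEmpty] using continuous_const
  have := Fintype.ofFinite ι
  simpa only [Finset.inf'_univ_eq_ciInf] using
    Continuous.finset_inf'_apply Finset.univ_nonempty fun i _ => hf i

theorem LipschitzWith.ciInf_of_finite {T : Type*} [PseudoMetricSpace T] [Nonempty ι]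
    {K : ℝ≥0} {f : ι → T → ℝ} (hf : ∀ i, LipschitzWith K (f i)) :
    LipschitzWith K fun x => ⨅ i, f i x :=
  LipschitzWith.of_le_add_mul K fun x y => sub_le_iff_le_add.1 <| le_ciInf fun i =>
    sub_le_iff_le_add.2 <| (ciInf_le (Finite.bddBelow_range _) i).trans ((hf i).le_add_mul x y)

theorem ciInf_eq_ciInf_of_forall_ne {β : Type*} [ConditionallyCompleteLinearOrder β]
    {a b : ι → β} {i j : ι} (hij : i ≠ j)
    (hab : ∀ k ≠ j, a k = b k) (ha : a i ≤ a j) (hb : b i ≤ b j) : ⨅ k, a k = ⨅ k, b k := by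
  have key : ∀ a b : ι → β, (∀ k ≠ j, a k = b k) → b i ≤ b j → ⨅ k, a k ≤ ⨅ k, b k := by
    intro a b hab hb
    have : Nonempty ι := ⟨i⟩
    refine le_ciInf fun k => ?_
    rcases eq_or_ne k j with rfl | hk
    · exact (ciInf_le (Finite.bddBelow_range a) i).trans ((hab i hij).trans_le hb)
    · exact (ciInf_le (Finite.bddBelow_range a) k).trans_eq (hab k hk)
  exact le_antisymm (key a b hab hb) (key b a (fun k hk => (hab k hk).symm) ha)

variable [DecidableEq ι]

theorem lipschitzWith_ciInf_sub_update (c g : ι → ℝ) (j : ι) :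
    LipschitzWith 1 fun t => ⨅ i, (c i - Function.update g j t i) := by
  have : Nonempty ι := ⟨j⟩
  refine LipschitzWith.ciInf_of_finite fun i => LipschitzWith.of_dist_le_mul fun s t => ?_
  rcases eq_or_ne i j with rfl | hij
  · simp only [Function.update_self, Real.dist_eq, sub_sub_sub_cancel_left, NNReal.coe_one,
      one_mul, abs_sub_comm t s, le_refl]
  · simp [Function.update_of_ne hij]

theorem hasDerivAt_ciInf_sub_update_of_forall_lt {c g : ι → ℝ} {j : ι}
    (hmin : ∀ i ≠ j, c j - g j < c i - g i) :
    HasDerivAt (fun t => ⨅ i, (c i - Function.update g j t i)) (-1) (g j) := by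
  have hnear : ∀ᶠ t in 𝓝 (g j), ∀ i ≠ j, c j - t < c i - g i := by
    refine eventually_all.2 fun i => ?_
    rcases eq_or_ne i j with rfl | hij
    · exact .of_forall fun _ h => (h rfl).elim
    filter_upwards [eventually_gt_nhds (show c j - c i + g i < g j by linarith [hmin i hij])]
      with t ht _
    linarith
  have heq : ∀ᶠ t in 𝓝 (g j), ⨅ i, (c i - Function.update g j t i) = c j - t := by
    filter_upwards [hnear] with t ht
    have : Nonempty ι := ⟨j⟩
    refine le_antisymm ((ciInf_le (Finite.bddBelow_range _) j).trans_eq (by simp))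
      (le_ciInf fun i => ?_)
    rcases eq_or_ne i j with rfl | hij
    · simp
    · simpa [Function.update_of_ne hij] using (ht i hij).le
  simpa using ((hasDerivAt_id (g j)).const_sub (c j)).congr_of_eventuallyEq heq

theorem hasDerivAt_ciInf_sub_update_of_lt {c g : ι → ℝ} {i j : ι}
    (hi : c i - g i < c j - g j) :
    HasDerivAt (fun t => ⨅ k, (c k - Function.update g j t k)) 0 (g j) := by
  have hij : i ≠ j := by rintro rfl; exact lt_irrefl _ hi
  have heq : ∀ᶠ t in 𝓝 (g j), ⨅ k, (c k - Function.update g j t k) = ⨅ k, (c k - g k) := by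
    filter_upwards [eventually_lt_nhds (show g j < c j - c i + g i by linarith)] with t ht
    refine ciInf_eq_ciInf_of_forall_ne hij (fun k hk => by simp [Function.update_of_ne hk])
      ?_ hi.le
    simp only [Function.update_of_ne hij, Function.update_self]
    linarith
  exact (hasDerivAt_const _ _).congr_of_eventuallyEq heq

theorem hasDerivAt_integral_ciInf_sub_update {α : Type*} [MeasurableSpace α] {μ : Measure α}
    [IsFiniteMeasure μ] {c : ι → α → ℝ} (hc : ∀ i, Measurable (c i)) {g : ι → ℝ} {j : ι}
    (hintegrable : Integrable (fun y => ⨅ i, (c i y - g i)) μ)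
    (hties : ∀ᵐ y ∂μ, ∀ i ≠ j, c i y - g i ≠ c j y - g j) :
    HasDerivAt (fun t => ∫ y, ⨅ i, (c i y - Function.update g j t i) ∂μ)
      (-μ.real {y | ∀ i, c j y - g j ≤ c i y - g i}) (g j) := by
  set cell := {y | ∀ i, c j y - g j ≤ c i y - g i}
  have hcell : MeasurableSet cell := by
    simp only [cell, ofPred_forall]
    exact .iInter fun i => measurableSet_le ((hc j).sub_const _) ((hc i).sub_const _)
  have hderiv : ∀ᵐ y ∂μ, HasDerivAt (fun t => ⨅ i, (c i y - Function.update g j t i))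
      (-cell.indicator 1 y) (g j) := by
    filter_upwards [hties] with y hy
    by_cases hy_cell : y ∈ cell
    · simpa [hy_cell] using hasDerivAt_ciInf_sub_update_of_forall_lt fun i hi =>
        (hy_cell i).lt_of_ne (hy i hi).symm
    · obtain ⟨i, hi⟩ := not_forall.1 hy_cell
      simpa [hy_cell] using hasDerivAt_ciInf_sub_update_of_lt (c := (c · y)) (not_le.1 hi)
  have key := hasDerivAt_integral_of_dominated_loc_of_lip (μ := μ)
    (F' := fun y => -cell.indicator 1 y) (bound := fun _ => 1) univ_mem
    (.of_forall fun t => (Measurable.iInf fun i => (hc i).sub_const _).aestronglyMeasurable)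
    (by simpa using hintegrable) (measurable_const.indicator hcell).neg.aestronglyMeasurable
    (.of_forall fun y => by simpa using lipschitzWith_ciInf_sub_update (c · y) g j)
    (integrable_const 1) hderiv
  simpa only [integral_neg, integral_indicator_one hcell] using key.2

end FiniteInfimum

theorem hasDerivAt_sum_mul_update {ι : Type*} [Fintype ι] [DecidableEq ι] (m g : ι → ℝ)
    (j : ι) : HasDerivAt (fun t => ∑ i, m i * Function.update g j t i) (m j) (g j) := by
  have h := HasDerivAt.fun_sum fun i (_ : i ∈ Finset.univ) =>
    (hasDerivAt_pi.1 (hasDerivAt_update g j (g j)) i).const_mul (m i)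
  simpa [Pi.single_apply] using h

theorem dualKantorovich_hasDerivAt_general
    {d : ℕ} (D : Set (Euc d)) (hD : IsCompact D)
    (ν : Measure (Euc d)) [IsProbabilityMeasure ν]
    (hac : ν ≪ (volume : Measure (Euc d)))
    {n : ℕ} (X : Fin n → Euc d) (hX : Function.Injective X)
    (m : Fin n → ℝ) (g : Fin n → ℝ) (j : Fin n) :
    HasDerivAt (fun t => dualKantorovich D ν X m (Function.update g j t))
      (m j - (ν (LaguerreCell D X g j)).toReal) (g j) := by
  have hsq : ∀ i, Continuous fun y : Euc d => ‖y - X i‖ ^ 2 := fun i => by fun_prop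
  have hcost : HasDerivAt (fun t => ∫ y in D, ⨅ i, (‖y - X i‖ ^ 2 - Function.update g j t i) ∂ν)
      (-(ν (LaguerreCell D X g j)).toReal) (g j) := by
    have := hasDerivAt_integral_ciInf_sub_update (μ := ν.restrict D)
      (fun i => (hsq i).measurable)
      ((continuous_ciInf_of_finite fun i => (hsq i).sub continuous_const).continuousOn
        |>.integrableOn_compact hD)
      (ae_restrict_of_ae (hac.ae_norm_sub_sq_sub_ne volume hX g j))
    rwa [measureReal_restrict_apply' hD.measurableSet, inter_comm] at this
  exact (hcost.add (hasDerivAt_sum_mul_update m g j)).congr_deriv (by ring)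

/-- the partial derivative of the dual Kantorovich functional with respect to
the weight `g_j` is `m_j − ν(L_j[X,g])`. -/
theorem dualKantorovich_hasDerivAt
    {d : ℕ} (D : Set (Euc d)) (hD : IsCompact D) (hDconv : Convex ℝ D)
    (ν : Measure (Euc d)) [IsProbabilityMeasure ν] (hνD : ν Dᶜ = 0)
    (hac : ν ≪ (volume : Measure (Euc d)))
    {n : ℕ} (hn : 0 < n) (X : Fin n → Euc d) (hX : Function.Injective X)
    (m : Fin n → ℝ) (g : Fin n → ℝ) (j : Fin n) :
    HasDerivAt (fun t => dualKantorovich D ν X m (Function.update g j t))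
      (m j - (ν (LaguerreCell D X g j)).toReal) (g j) :=
  dualKantorovich_hasDerivAt_general D hD ν hac X hX m g j

end
end

section
/- Let D ⊂ ℝ^d be compact and convex and ν a probability measure on D absolutely continuous with respect to Lebesgue measure. Fix pairwise distinct sites X = (x_1,…,x_n) and weights g ∈ ℝ^n. Then for each ε > 0 the functions χ_i^ε[X,g], i = 1,…,n, form a partition of unity on D, and as ε → 0, χ_i^ε[X,g] converges to the indicator function χ_{L_i[X,g]} of the Laguerre cell in L¹(ν) for every i. -/
open MeasureTheory Set Filter Topology
open scoped ENNReal NNReal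

noncomputable section

/-- Entropy-regularized cell function
`χ_i^ε[X,g](y) = exp((g_i − |y−x_i|²)/ε) / Σ_j exp((g_j − |y−x_j|²)/ε)`. -/
def chiEps {d n : ℕ} (X : Fin n → Euc d) (g : Fin n → ℝ) (ε : ℝ) (i : Fin n)
    (y : Euc d) : ℝ :=
  Real.exp ((g i - ‖y - X i‖ ^ 2) / ε) / ∑ j, Real.exp ((g j - ‖y - X j‖ ^ 2) / ε)

/-- Regularized mass `m_i^ε[X,g] = ∫ χ_i^ε[X,g] dν`. -/
def mEps {d n : ℕ} (ν : Measure (Euc d)) (X : Fin n → Euc d) (g : Fin n → ℝ) (ε : ℝ)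
    (i : Fin n) : ℝ :=
  ∫ y, chiEps X g ε i y ∂ν

/-- Regularized barycenter `b_i^ε[X,g] = (m_i^ε)⁻¹ ∫ y χ_i^ε[X,g](y) dν(y)`. -/
def bEps {d n : ℕ} (ν : Measure (Euc d)) (X : Fin n → Euc d) (g : Fin n → ℝ) (ε : ℝ)
    (i : Fin n) : Euc d :=
  (mEps ν X g ε i)⁻¹ • ∫ y, chiEps X g ε i y • y ∂ν

/-!
`χ_i^ε[X,g](y)` is the softmax at temperature `ε` of the scores `g_j - ‖y - x_j‖²`, so the
`χ_i^ε` sum to one, and as `ε → 0` the softmax of a score vector with a strict maximum tends to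
the indicator of that maximum. Ties between two distinct sites happen only on a hyperplane, which
is Lebesgue-null and hence `ν`-null; so `χ_i^ε → 1_{L_i}` `ν`-a.e., and dominated convergence
(everything is bounded by `1` and `ν` is finite) gives the `L¹(ν)` convergence.
-/

open scoped RealInnerProductSpace

lemma tendsto_exp_div_nhdsGT_zero_of_neg {c : ℝ} (hc : c < 0) :
    Tendsto (fun ε : ℝ => Real.exp (c / ε)) (𝓝[>] 0) (𝓝 0) := by
  have hdiv : Tendsto (fun ε : ℝ => c / ε) (𝓝[>] 0) atBot := by
    simpa only [div_eq_mul_inv] using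
      (tendsto_const_mul_atBot_of_neg hc).2 (tendsto_inv_nhdsGT_zero (𝕜 := ℝ))
  exact Real.tendsto_exp_atBot.comp hdiv

section Softmax

variable {ι : Type*} [Fintype ι]

def softmax (f : ι → ℝ) (ε : ℝ) (i : ι) : ℝ :=
  Real.exp (f i / ε) / ∑ j, Real.exp (f j / ε)

lemma softmax_nonneg (f : ι → ℝ) (ε : ℝ) (i : ι) : 0 ≤ softmax f ε i :=
  div_nonneg (Real.exp_pos _).le (Finset.sum_nonneg fun _ _ => (Real.exp_pos _).le)

lemma sum_softmax [Nonempty ι] (f : ι → ℝ) (ε : ℝ) : ∑ i, softmax f ε i = 1 := by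
  simp only [softmax, ← Finset.sum_div]
  exact div_self (Finset.sum_pos (fun j _ => Real.exp_pos _) Finset.univ_nonempty).ne'

lemma softmax_le_exp_sub (f : ι → ℝ) (ε : ℝ) (i j : ι) :
    softmax f ε i ≤ Real.exp ((f i - f j) / ε) := by
  have hj : Real.exp (f j / ε) ≤ ∑ k, Real.exp (f k / ε) :=
    Finset.single_le_sum (fun k _ => (Real.exp_pos (f k / ε)).le) (Finset.mem_univ j)
  calc softmax f ε i ≤ Real.exp (f i / ε) / Real.exp (f j / ε) :=
        div_le_div_of_nonneg_left (Real.exp_pos _).le (Real.exp_pos _) hj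
    _ = Real.exp ((f i - f j) / ε) := by rw [← Real.exp_sub, sub_div]

lemma tendsto_softmax_nhdsGT_zero_of_lt {f : ι → ℝ} {i j : ι} (h : f i < f j) :
    Tendsto (fun ε => softmax f ε i) (𝓝[>] 0) (𝓝 0) :=
  squeeze_zero (softmax_nonneg f · i) (softmax_le_exp_sub f · i j)
    (tendsto_exp_div_nhdsGT_zero_of_neg (sub_neg.2 h))

lemma tendsto_softmax_nhdsGT_zero_of_forall_lt {f : ι → ℝ} {i : ι} (h : ∀ j ≠ i, f j < f i) :
    Tendsto (fun ε => softmax f ε i) (𝓝[>] 0) (𝓝 1) := by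
  classical
  have : Nonempty ι := ⟨i⟩
  have hrest : Tendsto (fun ε => ∑ j ∈ Finset.univ.erase i, softmax f ε j) (𝓝[>] 0) (𝓝 0) := by
    simpa only [Finset.sum_const_zero] using tendsto_finsetSum _ fun j hj =>
      tendsto_softmax_nhdsGT_zero_of_lt (h j (Finset.ne_of_mem_erase hj))
  have hsplit : ∀ ε, 1 - ∑ j ∈ Finset.univ.erase i, softmax f ε j = softmax f ε i := fun ε => by
    rw [← sum_softmax f ε, ← Finset.add_sum_erase _ _ (Finset.mem_univ i), add_sub_cancel_right]
  simpa only [sub_zero, hsplit] using hrest.const_sub 1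

end Softmax

section Bisector

variable {E : Type*} [NormedAddCommGroup E] [InnerProductSpace ℝ E] [FiniteDimensional ℝ E]
  [MeasurableSpace E] [BorelSpace E]

lemma addHaar_setOf_inner_eq_s10 (μ : Measure E) [μ.IsAddHaarMeasure] {v : E} (hv : v ≠ 0)
    (c : ℝ) : μ {y | ⟪v, y⟫ = c} = 0 := by
  set x₀ : E := (c / ‖v‖ ^ 2) • v
  have hx₀ : ⟪v, x₀⟫ = c := by
    rw [real_inner_smul_right, real_inner_self_eq_norm_sq]
    field_simp [norm_ne_zero_iff.2 hv]
  set K : Submodule ℝ E := LinearMap.ker (innerSL ℝ v : E →ₗ[ℝ] ℝ)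
  have hK : K ≠ ⊤ := fun hK => hv <| by
    simpa [K] using (hK ▸ Submodule.mem_top : v ∈ K)
  have hset : {y | ⟪v, y⟫ = c} = (· + -x₀) ⁻¹' (K : Set E) := by
    ext y
    simp [K, ← sub_eq_add_neg, inner_sub_right, hx₀, sub_eq_zero]
  rw [hset, measure_preimage_add_right]
  exact Measure.addHaar_submodule μ K hK

/-- Expanding the squares, the tie set of two distinct sites is the hyperplane
`⟪2 (b - a), y⟫ = (‖b‖² - gb) - (‖a‖² - ga)`. -/
lemma addHaar_setOf_sq_norm_sub_eq (μ : Measure E) [μ.IsAddHaarMeasure] {a b : E} (hab : a ≠ b)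
    (ga gb : ℝ) : μ {y | ‖y - a‖ ^ 2 - ga = ‖y - b‖ ^ 2 - gb} = 0 := by
  have hv : (2 : ℝ) • (b - a) ≠ 0 := smul_ne_zero two_ne_zero (sub_ne_zero.2 hab.symm)
  convert addHaar_setOf_inner_eq_s10 μ hv ((‖b‖ ^ 2 - gb) - (‖a‖ ^ 2 - ga)) using 2
  ext y
  rw [mem_ofPred_eq, mem_ofPred_eq, norm_sub_sq_real, norm_sub_sq_real, real_inner_smul_left, inner_sub_left,
    real_inner_comm b, real_inner_comm a]
  constructor <;> intro h <;> linarith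

lemma ae_sq_norm_sub_ne_of_injective {ι : Type*} [Countable ι] {μ ν : Measure E}
    [μ.IsAddHaarMeasure] (hac : ν ≪ μ) {X : ι → E} (hX : Function.Injective X) (g : ι → ℝ) :
    ∀ᵐ y ∂ν, ∀ j k, j ≠ k → ‖y - X j‖ ^ 2 - g j ≠ ‖y - X k‖ ^ 2 - g k := by
  refine hac.ae_le (ae_all_iff.2 fun j => ae_all_iff.2 fun k => ?_)
  by_cases hjk : j = k
  · exact Eventually.of_forall fun _ h => absurd hjk h
  · refine (measure_eq_zero_iff_ae_notMem.1
      (addHaar_setOf_sq_norm_sub_eq μ (hX.ne hjk) (g j) (g k))).mono fun y hy _ => hy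

end Bisector

lemma tendsto_integral_norm_sub_of_tendsto_ae {α ι E : Type*} [MeasurableSpace α]
    [NormedAddCommGroup E] {μ : Measure α} [IsFiniteMeasure μ] {l : Filter ι}
    [l.IsCountablyGenerated] [l.NeBot] {F : ι → α → E} {f : α → E} {C : ℝ}
    (hF : ∀ i, AEStronglyMeasurable (F i) μ) (hFC : ∀ i x, ‖F i x‖ ≤ C)
    (hlim : ∀ᵐ x ∂μ, Tendsto (fun i => F i x) l (𝓝 (f x))) :
    Tendsto (fun i => ∫ x, ‖F i x - f x‖ ∂μ) l (𝓝 0) := by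
  have hf : AEStronglyMeasurable f μ := aestronglyMeasurable_of_tendsto_ae l hF hlim
  have hfC : ∀ᵐ x ∂μ, ‖f x‖ ≤ C :=
    hlim.mono fun x hx => le_of_tendsto' hx.norm fun i => hFC i x
  have hbound : ∀ i, ∀ᵐ x ∂μ, ‖‖F i x - f x‖‖ ≤ C + C := fun i =>
    hfC.mono fun x hx => by
      rw [norm_norm]
      exact (norm_sub_le _ _).trans (add_le_add (hFC i x) hx)
  have hlim' : ∀ᵐ x ∂μ, Tendsto (fun i => ‖F i x - f x‖) l (𝓝 0) :=
    hlim.mono fun x hx => by simpa using (hx.sub_const (f x)).norm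
  simpa only [integral_zero] using tendsto_integral_filter_of_dominated_convergence
    (F := fun i x => ‖F i x - f x‖) (fun _ => C + C)
    (Eventually.of_forall fun i => ((hF i).sub hf).norm) (Eventually.of_forall hbound)
    (integrable_const _) hlim'

lemma chiEps_eq_softmax {d n : ℕ} (X : Fin n → Euc d) (g : Fin n → ℝ) (ε : ℝ) (i : Fin n)
    (y : Euc d) : chiEps X g ε i y = softmax (fun j => g j - ‖y - X j‖ ^ 2) ε i :=
  rfl

lemma measurable_chiEps {d n : ℕ} (X : Fin n → Euc d) (g : Fin n → ℝ) (ε : ℝ) (i : Fin n) :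
    Measurable (chiEps X g ε i) := by
  unfold chiEps
  fun_prop

lemma tendsto_chiEps_indicator {d n : ℕ} {D : Set (Euc d)} {X : Fin n → Euc d} {g : Fin n → ℝ}
    (i : Fin n) {y : Euc d} (hyD : y ∈ D)
    (hy : ∀ j k, j ≠ k → ‖y - X j‖ ^ 2 - g j ≠ ‖y - X k‖ ^ 2 - g k) :
    Tendsto (fun ε => chiEps X g ε i y) (𝓝[>] 0)
      (𝓝 ((LaguerreCell D X g i).indicator 1 y)) := by
  simp only [chiEps_eq_softmax]
  by_cases hcell : y ∈ LaguerreCell D X g i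
  · rw [indicator_of_mem hcell, Pi.one_apply]
    refine tendsto_softmax_nhdsGT_zero_of_forall_lt fun j hj => ?_
    have := lt_of_le_of_ne (hcell.2 j) (hy i j hj.symm)
    linarith
  · rw [indicator_of_notMem hcell]
    obtain ⟨j, hj⟩ : ∃ j, ‖y - X j‖ ^ 2 - g j < ‖y - X i‖ ^ 2 - g i := by
      by_contra! h
      exact hcell ⟨hyD, h⟩
    exact tendsto_softmax_nhdsGT_zero_of_lt (j := j) (by linarith)

theorem chiEps_partition_and_L1_convergence_general
    {d : ℕ} (D : Set (Euc d))
    (ν : Measure (Euc d)) [IsProbabilityMeasure ν] (hνD : ν Dᶜ = 0)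
    (hac : ν ≪ (volume : Measure (Euc d)))
    {n : ℕ} (hn : 0 < n) (X : Fin n → Euc d) (hX : Function.Injective X) (g : Fin n → ℝ) :
    (∀ ε : ℝ, 0 < ε → ∀ y ∈ D, ∑ i, chiEps X g ε i y = 1) ∧
    (∀ i, Tendsto
      (fun ε => ∫ y, |chiEps X g ε i y - (LaguerreCell D X g i).indicator (1 : Euc d → ℝ) y| ∂ν)
      (𝓝[>] (0 : ℝ)) (𝓝 0)) := by
  have : Nonempty (Fin n) := ⟨⟨0, hn⟩⟩
  refine ⟨fun ε _ y _ => sum_softmax _ ε, fun i => ?_⟩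
  have hlim : ∀ᵐ y ∂ν, Tendsto (fun ε => chiEps X g ε i y) (𝓝[>] 0)
      (𝓝 ((LaguerreCell D X g i).indicator 1 y)) := by
    filter_upwards [measure_eq_zero_iff_ae_notMem.1 hνD, ae_sq_norm_sub_ne_of_injective hac hX g]
      with y hyD hy
    exact tendsto_chiEps_indicator i (not_not.1 hyD) hy
  have hbound : ∀ ε y, ‖chiEps X g ε i y‖ ≤ 1 := fun ε y => by
    rw [chiEps_eq_softmax, Real.norm_of_nonneg (softmax_nonneg _ _ _)]
    exact (Finset.single_le_sum (fun j _ => softmax_nonneg _ ε j) (Finset.mem_univ i)).trans_eq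
      (sum_softmax _ ε)
  simpa only [Real.norm_eq_abs] using tendsto_integral_norm_sub_of_tendsto_ae
    (fun ε => (measurable_chiEps X g ε i).aestronglyMeasurable) hbound hlim

/-- for each `ε > 0` the entropy-regularized cell functions form a partition
of unity on `D`, and as `ε → 0` they converge in `L¹(ν)` to the Laguerre-cell indicators. -/
theorem chiEps_partition_and_L1_convergence
    {d : ℕ} (D : Set (Euc d)) (hD : IsCompact D) (hDconv : Convex ℝ D)
    (ν : Measure (Euc d)) [IsProbabilityMeasure ν] (hνD : ν Dᶜ = 0)
    (hac : ν ≪ (volume : Measure (Euc d)))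
    {n : ℕ} (hn : 0 < n) (X : Fin n → Euc d) (hX : Function.Injective X) (g : Fin n → ℝ) :
    (∀ ε : ℝ, 0 < ε → ∀ y ∈ D, ∑ i, chiEps X g ε i y = 1) ∧
    (∀ i, Tendsto
      (fun ε => ∫ y, |chiEps X g ε i y - (LaguerreCell D X g i).indicator (1 : Euc d → ℝ) y| ∂ν)
      (𝓝[>] (0 : ℝ)) (𝓝 0)) :=
  chiEps_partition_and_L1_convergence_general D ν hνD hac hn X hX g
end
end
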